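/- arXiv:1911.08521 — 4 statements merged into one kernel-verified Lean document; each statement's English description precedes it below -/
import Mathlib

section
/- Let Q₀(w) = σ²(1 + w'w) + (μ₀ - M'w)' Ω (μ₀ - M'w) on the simplex Δ^{J-1}. Suppose w* ∈ Δ^{J-1} satisfies μ₀ = M'w* (i.e., w* exactly reconstructs the factor loadings). If σ² > 0 and w* ≠ (1/J, ..., 1/J), then w* is not a minimizer of Q₀ over Δ^{J-1}. -/
/-!
Move from `w*` towards the barycentre `u = (1/J, …, 1/J)` along `w* + t (u - w*)`, `t ∈ [0, 1]`,
which stays in the simplex. As `w*` reconstructs `μ₀`, the residual `μ₀ - M'w` along this segment is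
`t M'(w* - u)`, so the factor term grows only like `t²`. Since the weights sum to one, `u` is
orthogonal to `w* - u`, so the penalty `w'w` drops by `(2t - t²)‖w* - u‖²`, which is of first order
in `t` and nonzero as `w* ≠ u`. Hence `Q₀` strictly decreases for suitable small `t > 0`.
-/

open Finset

/-- The objective `Q₀` of the paper. -/
noncomputable def weightObjective {ι κ : Type*} [Fintype ι] [Fintype κ] (σ2 : ℝ)
    (Ω : Matrix κ κ ℝ) (M : Matrix ι κ ℝ) (μ0 : κ → ℝ) (w : ι → ℝ) : ℝ :=
  σ2 * (1 + ∑ j, w j ^ 2) +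
    ∑ f, ∑ f', (μ0 f - ∑ j, M j f * w j) * Ω f f' * (μ0 f' - ∑ j, M j f' * w j)

section

variable {ι : Type*} [Fintype ι]

theorem sum_sq_sub_pos_of_ne_const {w : ι → ℝ} {c : ℝ} (h : w ≠ fun _ => c) :
    0 < ∑ j, (w j - c) ^ 2 := by
  obtain ⟨j, hj⟩ := Function.ne_iff.mp h
  exact sum_pos' (fun _ _ => sq_nonneg _) ⟨j, mem_univ j, sq_pos_of_ne_zero (sub_ne_zero.mpr hj)⟩

theorem const_inv_card_mem_stdSimplex [Nonempty ι] :
    (fun _ => (Fintype.card ι : ℝ)⁻¹) ∈ stdSimplex ℝ ι :=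
  ⟨fun _ => by positivity, by simp⟩

theorem sum_inv_card_mul_inv_card_sub_eq_zero {w : ι → ℝ} (hw : ∑ j, w j = 1) :
    ∑ j, (Fintype.card ι : ℝ)⁻¹ * ((Fintype.card ι : ℝ)⁻¹ - w j) = 0 := by
  rw [← mul_sum, sum_sub_distrib, hw]
  rcases isEmpty_or_nonempty ι with _ | _
  · simp
  · simp [Fintype.card_ne_zero]

theorem sum_sq_add_smul_sub {w u : ι → ℝ} (hu : ∑ j, u j * (u j - w j) = 0) (t : ℝ) :
    ∑ j, (w + t • (u - w)) j ^ 2 = ∑ j, w j ^ 2 - (2 * t - t ^ 2) * ∑ j, (w j - u j) ^ 2 := by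
  have expand : ∀ j, (w + t • (u - w)) j ^ 2 =
      w j ^ 2 - (2 * t - t ^ 2) * (w j - u j) ^ 2 + 2 * t * (u j * (u j - w j)) := fun j => by
    simp only [Pi.add_apply, Pi.smul_apply, Pi.sub_apply, smul_eq_mul]; ring
  simp only [expand, sum_add_distrib, sum_sub_distrib, ← mul_sum, hu]
  ring

variable {κ : Type*}

theorem sub_sum_mul_add_smul_sub (M : Matrix ι κ ℝ) {μ0 : κ → ℝ} {w : ι → ℝ}
    (hrec : ∀ f, μ0 f = ∑ j, M j f * w j) (u : ι → ℝ) (t : ℝ) (f : κ) :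
    μ0 f - ∑ j, M j f * (w + t • (u - w)) j = t * ∑ j, M j f * (w j - u j) := by
  rw [hrec, ← sum_sub_distrib, mul_sum]
  exact sum_congr rfl fun _ _ => by
    simp only [Pi.add_apply, Pi.smul_apply, Pi.sub_apply, smul_eq_mul]; ring

variable [Fintype κ]

theorem sum_sum_smul_mul_mul_smul (Ω : Matrix κ κ ℝ) (x : κ → ℝ) (t : ℝ) :
    ∑ f, ∑ f', t * x f * Ω f f' * (t * x f') = t ^ 2 * ∑ f, ∑ f', x f * Ω f f' * x f' := by
  simp_rw [mul_sum]
  exact sum_congr rfl fun _ _ => sum_congr rfl fun _ _ => by ring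

theorem weightObjective_add_smul_sub (σ2 : ℝ) (Ω : Matrix κ κ ℝ) (M : Matrix ι κ ℝ)
    {μ0 : κ → ℝ} {w u : ι → ℝ} (hrec : ∀ f, μ0 f = ∑ j, M j f * w j)
    (hu : ∑ j, u j * (u j - w j) = 0) (t : ℝ) :
    weightObjective σ2 Ω M μ0 (w + t • (u - w)) =
      weightObjective σ2 Ω M μ0 w - (2 * t - t ^ 2) * (σ2 * ∑ j, (w j - u j) ^ 2) +
        t ^ 2 * ∑ f, ∑ f', (∑ j, M j f * (w j - u j)) * Ω f f' * ∑ j, M j f' * (w j - u j) := by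
  have hres : ∀ f, μ0 f - ∑ j, M j f * w j = 0 := fun f => sub_eq_zero.mpr (hrec f)
  simp only [weightObjective, hres, sub_sum_mul_add_smul_sub M hrec u t, sum_sq_add_smul_sub hu,
    sum_sum_smul_mul_mul_smul, zero_mul, mul_zero, sum_const_zero]
  ring

theorem exists_mem_Icc_sq_mul_lt {a b : ℝ} (ha : 0 < a) (hb : 0 ≤ b) :
    ∃ t ∈ Set.Icc (0 : ℝ) 1, t ^ 2 * b < (2 * t - t ^ 2) * a := by
  have hab : 0 < a + b := by positivity
  refine ⟨a / (a + b), ⟨by positivity, (div_le_one hab).mpr (by linarith)⟩, ?_⟩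
  have gap : (2 * (a / (a + b)) - (a / (a + b)) ^ 2) * a - (a / (a + b)) ^ 2 * b =
      a ^ 2 / (a + b) := by
    field_simp; ring
  have : 0 < a ^ 2 / (a + b) := by positivity
  linarith

end

theorem reconstructing_weights_not_minimizer_general
    (J F : ℕ) (hJ : 1 ≤ J)
    (σ2 : ℝ) (hσ : 0 < σ2)
    (Ω : Matrix (Fin F) (Fin F) ℝ)
    (hΩ : ∀ x : Fin F → ℝ, 0 ≤ ∑ f, ∑ f', x f * Ω f f' * x f')
    (M : Matrix (Fin J) (Fin F) ℝ) (μ0 : Fin F → ℝ)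
    (wstar : Fin J → ℝ) (hw : wstar ∈ stdSimplex ℝ (Fin J))
    (hrec : ∀ f, μ0 f = ∑ j, M j f * wstar j)
    (hne : wstar ≠ fun _ => 1 / (J : ℝ)) :
    let Q : (Fin J → ℝ) → ℝ := fun w =>
      σ2 * (1 + ∑ j, w j ^ 2) +
        ∑ f, ∑ f', (μ0 f - ∑ j, M j f * w j) * Ω f f' * (μ0 f' - ∑ j, M j f' * w j)
    ¬ (∀ v ∈ stdSimplex ℝ (Fin J), Q wstar ≤ Q v) := by
  intro Q hmin
  have : Nonempty (Fin J) := ⟨⟨0, hJ⟩⟩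
  set u : Fin J → ℝ := fun _ => (Fintype.card (Fin J) : ℝ)⁻¹
  have hwu : wstar ≠ u := by simpa [u] using hne
  obtain ⟨t, ht, hdec⟩ := exists_mem_Icc_sq_mul_lt
    (mul_pos hσ (sum_sq_sub_pos_of_ne_const hwu)) (hΩ fun f => ∑ j, M j f * (wstar j - u j))
  have hle : weightObjective σ2 Ω M μ0 wstar ≤
      weightObjective σ2 Ω M μ0 (wstar + t • (u - wstar)) :=
    hmin _ (convex_stdSimplex ℝ (Fin J) |>.add_smul_sub_mem hw const_inv_card_mem_stdSimplex ht)
  rw [weightObjective_add_smul_sub σ2 Ω M hrec (sum_inv_card_mul_inv_card_sub_eq_zero hw.2)] at hle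
  linarith

/-- if w* ∈ Δ^{J-1} exactly reconstructs the factor loadings
(μ₀ = M'w*), σ² > 0, and w* is not the equal-weights vector, then w* does not
minimize Q₀ over the simplex. -/
theorem reconstructing_weights_not_minimizer
    (J F : ℕ) (hJ : 1 ≤ J) (hF : 1 ≤ F)
    (σ2 : ℝ) (hσ : 0 < σ2)
    (Ω : Matrix (Fin F) (Fin F) ℝ)
    (hΩ : ∀ x : Fin F → ℝ, 0 ≤ ∑ f, ∑ f', x f * Ω f f' * x f')
    (M : Matrix (Fin J) (Fin F) ℝ) (μ0 : Fin F → ℝ)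
    (wstar : Fin J → ℝ) (hw : wstar ∈ stdSimplex ℝ (Fin J))
    (hrec : ∀ f, μ0 f = ∑ j, M j f * wstar j)
    (hne : wstar ≠ fun _ => 1 / (J : ℝ)) :
    let Q : (Fin J → ℝ) → ℝ := fun w =>
      σ2 * (1 + ∑ j, w j ^ 2) +
        ∑ f, ∑ f', (μ0 f - ∑ j, M j f * w j) * Ω f f' * (μ0 f' - ∑ j, M j f' * w j)
    ¬ (∀ v ∈ stdSimplex ℝ (Fin J), Q wstar ≤ Q v) :=
  reconstructing_weights_not_minimizer_general J F hJ σ2 hσ Ω hΩ M μ0 wstar hw hrec hne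
end

section
/- Consider J = 2K control units (K ≥ 1) split into two groups of size J/2 each. Minimize Q(w) = σ²(1 + w'w) + (1 - Σ_{j ∈ G₁} wⱼ)² + (Σ_{j ∈ G₂} wⱼ)² over Δ^{J-1}, where G₁ is the first group (sharing the treated unit's factor) and G₂ the second group. The unique minimizer w̄ is symmetric within each group, and the total misallocated weight satisfies Σ_{j ∈ G₂} w̄ⱼ = σ²/(2σ² + J). -/
private lemma card_filter_lt_fin (K : ℕ) :
    (Finset.univ.filter (fun j : Fin (2*K) => (j:ℕ) < K)).card = K := by
  have : (Finset.univ.filter (fun j : Fin (2*K) => (j:ℕ) < K)) =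
      Finset.map (Fin.castLEEmb (by omega)) (Finset.univ : Finset (Fin K)) := by
    ext j
    simp [Fin.castLEEmb, Fin.castLE, Fin.ext_iff]
    constructor
    · intro hj; exact ⟨⟨j, hj⟩, rfl⟩
    · rintro ⟨i, hi⟩; omega
  rw [this]; simp

/-- two groups of J/2 = K units each.  The unique minimizer over the
simplex of Q(w) = σ²(1+w'w) + (1 - Σ_{G₁} w)² + (Σ_{G₂} w)² is symmetric within
each group and puts total weight σ²/(2σ² + J) on the second group. -/
theorem two_group_misallocation
    (K : ℕ) (hK : 1 ≤ K) (σ2 : ℝ) (hσ : 0 < σ2) :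
    let J : ℕ := 2 * K
    let G1 : Finset (Fin (2 * K)) := Finset.univ.filter (fun j => (j : ℕ) < K)
    let G2 : Finset (Fin (2 * K)) := Finset.univ.filter (fun j => ¬ (j : ℕ) < K)
    let Q : (Fin (2 * K) → ℝ) → ℝ := fun w =>
      σ2 * (1 + ∑ j, w j ^ 2) +
        (1 - ∑ j ∈ G1, w j) ^ 2 + (∑ j ∈ G2, w j) ^ 2
    ∃ wbar : Fin (2 * K) → ℝ,
      (wbar ∈ stdSimplex ℝ (Fin (2 * K)) ∧
        ∀ v ∈ stdSimplex ℝ (Fin (2 * K)), Q wbar ≤ Q v) ∧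
      (∀ w' : Fin (2 * K) → ℝ,
        (w' ∈ stdSimplex ℝ (Fin (2 * K)) ∧
          ∀ v ∈ stdSimplex ℝ (Fin (2 * K)), Q w' ≤ Q v) → w' = wbar) ∧
      (∀ i ∈ G1, ∀ j ∈ G1, wbar i = wbar j) ∧
      (∀ i ∈ G2, ∀ j ∈ G2, wbar i = wbar j) ∧
      (∑ j ∈ G2, wbar j = σ2 / (2 * σ2 + (J : ℝ))) := by
  intro J G1 G2 Q
  have hKpos : (0:ℝ) < K := by exact_mod_cast hK
  have hden : (0:ℝ) < 2 * σ2 + 2 * K := by positivity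
  obtain ⟨s, hskey, hs0, hs1, hsJ⟩ :
      ∃ s : ℝ, s * (2 * σ2 + 2 * K) = σ2 ∧ 0 < s ∧ s < 1 ∧
        s = σ2 / (2 * σ2 + (J : ℝ)) := by
    refine ⟨σ2 / (2 * σ2 + 2 * K), div_mul_cancel₀ _ (ne_of_gt hden),
      div_pos hσ hden, ?_, ?_⟩
    · rw [div_lt_one hden]; linarith
    · have hJ : ((J : ℕ) : ℝ) = 2 * (K : ℝ) := by simp [J]
      rw [hJ]
  set wbar : Fin (2 * K) → ℝ := fun j => if (j:ℕ) < K then (1 - s) / K else s / K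
    with hwbar_def
  have hw1 : ∀ j ∈ G1, wbar j = (1 - s) / K := by
    intro j hj
    have : (j:ℕ) < K := (Finset.mem_filter.mp hj).2
    simp [hwbar_def, this]
  have hw2 : ∀ j ∈ G2, wbar j = s / K := by
    intro j hj
    have : ¬ (j:ℕ) < K := (Finset.mem_filter.mp hj).2
    simp [hwbar_def, this]
  have hcard1 : G1.card = K := card_filter_lt_fin K
  have hcard2 : G2.card = K := by
    have h := Finset.card_filter_add_card_filter_not
      (s := (Finset.univ : Finset (Fin (2*K)))) (p := fun j => (j:ℕ) < K)
    have h2 : G1.card + G2.card = Finset.univ.card := h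
    simp only [Finset.card_univ, Fintype.card_fin] at h2
    omega
  have hsum1 : ∑ j ∈ G1, wbar j = 1 - s := by
    rw [Finset.sum_congr rfl hw1, Finset.sum_const, hcard1, nsmul_eq_mul]
    field_simp
  have hsum2 : ∑ j ∈ G2, wbar j = s := by
    rw [Finset.sum_congr rfl hw2, Finset.sum_const, hcard2, nsmul_eq_mul]
    field_simp
  have hsplit : ∀ f : Fin (2*K) → ℝ, ∑ j ∈ G1, f j + ∑ j ∈ G2, f j = ∑ j, f j := by
    intro f
    exact Finset.sum_filter_add_sum_filter_not (Finset.univ : Finset (Fin (2*K)))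
      (fun j => (j:ℕ) < K) f
  have hsum : ∑ j, wbar j = 1 := by
    rw [← hsplit wbar, hsum1, hsum2]; ring
  have hmem : wbar ∈ stdSimplex ℝ (Fin (2 * K)) := by
    refine ⟨fun j => ?_, hsum⟩
    simp only [hwbar_def]
    split
    · have : 0 ≤ 1 - s := by linarith
      positivity
    · positivity
  -- key identity
  have key : ∀ v : Fin (2*K) → ℝ, ∑ j, v j = 1 →
      Q v = Q wbar + σ2 * ∑ j, (v j - wbar j) ^ 2
        + (∑ j ∈ G1, (v j - wbar j)) ^ 2 + (∑ j ∈ G2, (v j - wbar j)) ^ 2 := by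
    intro v hv
    set D1 : ℝ := ∑ j ∈ G1, (v j - wbar j) with hD1
    set D2 : ℝ := ∑ j ∈ G2, (v j - wbar j) with hD2
    have hD : D1 + D2 = 0 := by
      rw [hD1, hD2, hsplit (fun j => v j - wbar j)]
      rw [Finset.sum_sub_distrib, hv, hsum]; ring
    have hA : ∑ j ∈ G1, v j = (1 - s) + D1 := by
      rw [hD1, Finset.sum_sub_distrib, hsum1]; ring
    have hB : ∑ j ∈ G2, v j = s + D2 := by
      rw [hD2, Finset.sum_sub_distrib, hsum2]; ring
    have hcross : ∑ j, wbar j * (v j - wbar j) = (1 - s) / K * D1 + s / K * D2 := by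
      rw [← hsplit (fun j => wbar j * (v j - wbar j))]
      congr 1
      · rw [hD1, Finset.mul_sum]
        exact Finset.sum_congr rfl (fun j hj => by rw [hw1 j hj])
      · rw [hD2, Finset.mul_sum]
        exact Finset.sum_congr rfl (fun j hj => by rw [hw2 j hj])
    have hsq : ∑ j, v j ^ 2 = ∑ j, wbar j ^ 2
        + 2 * ((1 - s) / K * D1 + s / K * D2) + ∑ j, (v j - wbar j) ^ 2 := by
      rw [← hcross, Finset.mul_sum, ← Finset.sum_add_distrib, ← Finset.sum_add_distrib]
      exact Finset.sum_congr rfl (fun j _ => by ring)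
    have hD2' : D2 = -D1 := by linarith
    simp only [Q]
    rw [hsq, hA, hB, hsum1, hsum2, hD2']
    have hKne : (K:ℝ) ≠ 0 := ne_of_gt hKpos
    field_simp
    linear_combination (-2 * D1) * hskey
  have hmin : ∀ v ∈ stdSimplex ℝ (Fin (2*K)), Q wbar ≤ Q v := by
    intro v hv
    rw [key v hv.2]
    have h1 : 0 ≤ ∑ j, (v j - wbar j) ^ 2 :=
      Finset.sum_nonneg (fun j _ => sq_nonneg _)
    nlinarith [sq_nonneg (∑ j ∈ G1, (v j - wbar j)), sq_nonneg (∑ j ∈ G2, (v j - wbar j))]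
  refine ⟨wbar, ⟨hmem, hmin⟩, ?_, ?_, ?_, ?_⟩
  · rintro w' ⟨hw'mem, hw'min⟩
    have h1 : Q w' ≤ Q wbar := hw'min wbar hmem
    have h2 := key w' hw'mem.2
    have hT : 0 ≤ ∑ j, (w' j - wbar j) ^ 2 :=
      Finset.sum_nonneg (fun j _ => sq_nonneg _)
    have hT0 : ∑ j, (w' j - wbar j) ^ 2 = 0 := by
      nlinarith [sq_nonneg (∑ j ∈ G1, (w' j - wbar j)), sq_nonneg (∑ j ∈ G2, (w' j - wbar j))]
    funext j
    have := (Finset.sum_eq_zero_iff_of_nonneg (fun j _ => sq_nonneg (w' j - wbar j))).mp hT0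
      j (Finset.mem_univ j)
    have := pow_eq_zero_iff (n := 2) (by norm_num) |>.mp this
    linarith [this]
  · intro i hi j hj; rw [hw1 i hi, hw1 j hj]
  · intro i hi j hj; rw [hw2 i hi, hw2 j hj]
  · rw [hsum2, hsJ]
end

section
/- Consider J control units (J ≥ 4 even) split into K = J/2 groups of 2 units each, where only the first group shares the treated unit's factor. Minimize Q(w) = σ²(1 + w'w) + (1 - s₁)² + Σ_{k=2}^{K} s_k² over Δ^{J-1}, where s_k = w_{2k-1} + w_{2k} is the total weight on group k. Then at the unique minimizer, the total misallocated weight equals Σ_{k ≥ 2} s_k = ((J-2)/J) · σ²/(σ² + 2). -/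
/-!
Up to the constant `σ2`, the objective is `σ2 ‖w‖² + ‖S w - e‖²`, where `S` takes group totals and
`e` is the indicator of the treated unit's group. At the candidate `wbar`, with equal weights within
each group and group totals `(σ2 / K + 2 e_k) / (σ2 + 2)`, the gradient is a constant vector, so the
linear term of the expansion around `wbar` vanishes on the simplex:
`Q v - Q wbar = σ2 ‖v - wbar‖² + ‖S v - S wbar‖²`. This gives minimality and, as `σ2 > 0`,
uniqueness; the misallocated weight is `(K - 1) σ2 / (K (σ2 + 2))`.
-/

open Finset

section GroupedRidge

variable {ι κ : Type*} [Fintype ι] [DecidableEq κ]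

def groupSum (g : ι → κ) (w : ι → ℝ) (k : κ) : ℝ :=
  ∑ j ∈ univ.filter (fun j => g j = k), w j

theorem groupSum_sub (g : ι → κ) (v w : ι → ℝ) (k : κ) :
    groupSum g (fun j => v j - w j) k = groupSum g v k - groupSum g w k :=
  sum_sub_distrib _ _

theorem groupSum_comp_div {g : ι → κ} {m : ℕ} (hm : ∀ k, #(univ.filter (fun j => g j = k)) = m)
    (hm0 : m ≠ 0) (c : κ → ℝ) (k : κ) : groupSum g (fun j => c (g j) / m) k = c k := by
  rw [groupSum, sum_congr rfl fun j hj => by rw [(mem_filter.1 hj).2], sum_const, hm, nsmul_eq_mul]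
  field_simp

variable [Fintype κ]

theorem sum_groupSum (g : ι → κ) (w : ι → ℝ) : ∑ k, groupSum g w k = ∑ j, w j :=
  sum_fiberwise univ g w

theorem sum_mul_groupSum (g : ι → κ) (h : κ → ℝ) (w : ι → ℝ) :
    ∑ k, h k * groupSum g w k = ∑ j, h (g j) * w j := by
  simp_rw [groupSum, mul_sum]
  rw [← sum_fiberwise univ g (fun j => h (g j) * w j)]
  exact sum_congr rfl fun k _ => sum_congr rfl fun j hj => by rw [(mem_filter.1 hj).2]

def groupedObjective (g : ι → κ) (σ2 : ℝ) (e : κ → ℝ) (w : ι → ℝ) : ℝ :=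
  σ2 * ∑ j, w j ^ 2 + ∑ k, (groupSum g w k - e k) ^ 2

/-- `hgrad` says that the gradient at `wbar` is the constant vector `2 μ`, so the linear term of the
expansion around `wbar` vanishes on the hyperplane of equal total weight. -/
theorem groupedObjective_eq_add {g : ι → κ} {σ2 μ : ℝ} {e : κ → ℝ} {wbar : ι → ℝ}
    (hgrad : ∀ j, σ2 * wbar j + (groupSum g wbar (g j) - e (g j)) = μ)
    {v : ι → ℝ} (hsum : ∑ j, v j = ∑ j, wbar j) :
    groupedObjective g σ2 e v = groupedObjective g σ2 e wbar
      + σ2 * ∑ j, (v j - wbar j) ^ 2 + ∑ k, (groupSum g v k - groupSum g wbar k) ^ 2 := by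
  have hlinear : σ2 * ∑ j, wbar j * (v j - wbar j)
      + ∑ k, (groupSum g wbar k - e k) * (groupSum g v k - groupSum g wbar k) = 0 := by
    simp_rw [← groupSum_sub, sum_mul_groupSum, mul_sum, ← sum_add_distrib, ← mul_assoc,
      ← add_mul, hgrad, ← mul_sum, sum_sub_distrib, hsum, sub_self, mul_zero]
  have hw : ∑ j, v j ^ 2 = ∑ j, wbar j ^ 2 + ∑ j, (v j - wbar j) ^ 2
      + 2 * ∑ j, wbar j * (v j - wbar j) := by
    rw [mul_sum, ← sum_add_distrib, ← sum_add_distrib]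
    exact sum_congr rfl fun j _ => by ring
  have hs : ∑ k, (groupSum g v k - e k) ^ 2 = ∑ k, (groupSum g wbar k - e k) ^ 2
      + ∑ k, (groupSum g v k - groupSum g wbar k) ^ 2
      + 2 * ∑ k, (groupSum g wbar k - e k) * (groupSum g v k - groupSum g wbar k) := by
    rw [mul_sum, ← sum_add_distrib, ← sum_add_distrib]
    exact sum_congr rfl fun k _ => by ring
  rw [groupedObjective, groupedObjective, hw, hs]
  linear_combination 2 * hlinear

theorem eq_of_groupedObjective_le {g : ι → κ} {σ2 μ : ℝ} {e : κ → ℝ} {wbar : ι → ℝ}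
    (hσ : 0 < σ2) (hgrad : ∀ j, σ2 * wbar j + (groupSum g wbar (g j) - e (g j)) = μ)
    {v : ι → ℝ} (hsum : ∑ j, v j = ∑ j, wbar j)
    (hle : groupedObjective g σ2 e v ≤ groupedObjective g σ2 e wbar) : v = wbar := by
  rw [groupedObjective_eq_add hgrad hsum] at hle
  have hgroups : 0 ≤ ∑ k, (groupSum g v k - groupSum g wbar k) ^ 2 :=
    sum_nonneg fun _ _ => sq_nonneg _
  have hdist : ∑ j, (v j - wbar j) ^ 2 = 0 :=
    le_antisymm (nonpos_of_mul_nonpos_right (by linarith) hσ) (sum_nonneg fun _ _ => sq_nonneg _)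
  funext j
  exact sub_eq_zero.1 <| pow_eq_zero_iff two_ne_zero |>.1 <|
    (sum_eq_zero_iff_of_nonneg fun _ _ => sq_nonneg _).1 hdist j (mem_univ j)

/-- The solution of `σ2 w_j + (S w)_{g j} - e_{g j} = const` that is constant on the groups
(of size `m`) and has total weight `1` when `∑ e = 1`. -/
noncomputable def groupedMinimizer (g : ι → κ) (m : ℕ) (σ2 : ℝ) (e : κ → ℝ) (j : ι) : ℝ :=
  (σ2 / Fintype.card κ + m * e (g j)) / (σ2 + m) / m

theorem groupSum_groupedMinimizer {g : ι → κ} {m : ℕ}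
    (hm : ∀ k, #(univ.filter (fun j => g j = k)) = m) (hm0 : m ≠ 0) (σ2 : ℝ) (e : κ → ℝ) (k : κ) :
    groupSum g (groupedMinimizer g m σ2 e) k = (σ2 / Fintype.card κ + m * e k) / (σ2 + m) :=
  groupSum_comp_div hm hm0 (fun k => (σ2 / Fintype.card κ + m * e k) / (σ2 + m)) k

theorem groupedMinimizer_grad {g : ι → κ} {m : ℕ}
    (hm : ∀ k, #(univ.filter (fun j => g j = k)) = m) (hm0 : m ≠ 0) {σ2 : ℝ} (hσ : 0 ≤ σ2)
    (e : κ → ℝ) (j : ι) :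
    σ2 * groupedMinimizer g m σ2 e j + (groupSum g (groupedMinimizer g m σ2 e) (g j) - e (g j))
      = σ2 / Fintype.card κ / m := by
  have hm0' : (m : ℝ) ≠ 0 := Nat.cast_ne_zero.2 hm0
  have hσm : σ2 + m ≠ 0 := by positivity
  rw [groupSum_groupedMinimizer hm hm0, groupedMinimizer]
  field_simp
  ring

theorem sum_groupedMinimizer {g : ι → κ} {m : ℕ}
    (hm : ∀ k, #(univ.filter (fun j => g j = k)) = m) (hm0 : m ≠ 0) {σ2 : ℝ} (hσ : 0 ≤ σ2)
    {e : κ → ℝ} (he1 : ∑ k, e k = 1) : ∑ j, groupedMinimizer g m σ2 e j = 1 := by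
  have : Nonempty κ := univ_nonempty_iff.1 (nonempty_of_sum_ne_zero (he1.symm ▸ one_ne_zero))
  have hσm : σ2 + m ≠ 0 := by positivity
  rw [← sum_groupSum g, sum_congr rfl fun k _ => groupSum_groupedMinimizer hm hm0 σ2 e k, ← sum_div,
    sum_add_distrib, ← mul_sum, he1, sum_const, card_univ, nsmul_eq_mul]
  field_simp

theorem groupedMinimizer_mem_stdSimplex {g : ι → κ} {m : ℕ}
    (hm : ∀ k, #(univ.filter (fun j => g j = k)) = m) (hm0 : m ≠ 0) {σ2 : ℝ} (hσ : 0 ≤ σ2)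
    {e : κ → ℝ} (he0 : 0 ≤ e) (he1 : ∑ k, e k = 1) :
    groupedMinimizer g m σ2 e ∈ stdSimplex ℝ ι :=
  ⟨fun j => by unfold groupedMinimizer; have : 0 ≤ e (g j) := he0 (g j); positivity,
    sum_groupedMinimizer hm hm0 hσ he1⟩

theorem groupedObjective_groupedMinimizer_le {g : ι → κ} {m : ℕ}
    (hm : ∀ k, #(univ.filter (fun j => g j = k)) = m) (hm0 : m ≠ 0) {σ2 : ℝ} (hσ : 0 ≤ σ2)
    {e : κ → ℝ} (he1 : ∑ k, e k = 1) {v : ι → ℝ} (hv : v ∈ stdSimplex ℝ ι) :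
    groupedObjective g σ2 e (groupedMinimizer g m σ2 e) ≤ groupedObjective g σ2 e v := by
  rw [groupedObjective_eq_add (groupedMinimizer_grad hm hm0 hσ e)
    (hv.2.trans (sum_groupedMinimizer hm hm0 hσ he1).symm)]
  have hdist : 0 ≤ ∑ j, (v j - groupedMinimizer g m σ2 e j) ^ 2 := sum_nonneg fun _ _ => sq_nonneg _
  have hgroups : 0 ≤ ∑ k, (groupSum g v k - groupSum g (groupedMinimizer g m σ2 e) k) ^ 2 :=
    sum_nonneg fun _ _ => sq_nonneg _
  linarith [mul_nonneg hσ hdist]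

theorem eq_groupedMinimizer_of_groupedObjective_le {g : ι → κ} {m : ℕ}
    (hm : ∀ k, #(univ.filter (fun j => g j = k)) = m) (hm0 : m ≠ 0) {σ2 : ℝ} (hσ : 0 < σ2)
    {e : κ → ℝ} (he1 : ∑ k, e k = 1) {v : ι → ℝ} (hv : v ∈ stdSimplex ℝ ι)
    (hle : groupedObjective g σ2 e v ≤ groupedObjective g σ2 e (groupedMinimizer g m σ2 e)) :
    v = groupedMinimizer g m σ2 e :=
  eq_of_groupedObjective_le hσ (groupedMinimizer_grad hm hm0 hσ.le e)
    (hv.2.trans (sum_groupedMinimizer hm hm0 hσ.le he1).symm) hle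

theorem sum_groupSum_groupedMinimizer_ne {g : ι → κ} {m : ℕ}
    (hm : ∀ k, #(univ.filter (fun j => g j = k)) = m) (hm0 : m ≠ 0) (σ2 : ℝ) (k0 : κ) :
    ∑ k ∈ univ.filter (fun k => k ≠ k0), groupSum g (groupedMinimizer g m σ2 (Pi.single k0 1)) k
      = ((Fintype.card κ : ℝ) - 1) / Fintype.card κ * (σ2 / (σ2 + m)) := by
  rw [sum_congr rfl fun k hk => by
    rw [groupSum_groupedMinimizer hm hm0, Pi.single_eq_of_ne (mem_filter.1 hk).2, mul_zero,
      add_zero]]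
  rw [sum_const, filter_ne', card_erase_of_mem (mem_univ _), card_univ, nsmul_eq_mul,
    Nat.cast_sub (Fintype.card_pos_iff.2 ⟨k0⟩)]
  ring

end GroupedRidge

theorem sum_sq_sub_single {κ : Type*} [Fintype κ] [DecidableEq κ] (x : κ → ℝ) (k0 : κ) :
    ∑ k, (x k - (Pi.single k0 1 : κ → ℝ) k) ^ 2
      = (1 - x k0) ^ 2 + ∑ k ∈ univ.filter (fun k => k ≠ k0), x k ^ 2 := by
  rw [← add_sum_erase univ _ (mem_univ k0), filter_ne', Pi.single_eq_same,
    sum_congr rfl fun k hk => by rw [Pi.single_eq_of_ne (ne_of_mem_erase hk), sub_zero]]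
  ring

def pairing (K : ℕ) (j : Fin (2 * K)) : Fin K := ⟨j / 2, by omega⟩

theorem card_filter_pairing_eq {K : ℕ} (k : Fin K) :
    #(univ.filter (fun j => pairing K j = k)) = 2 := by
  have hfiber : univ.filter (fun j => pairing K j = k)
      = {⟨2 * k, by omega⟩, ⟨2 * k + 1, by omega⟩} := by
    ext j
    simp only [pairing, mem_filter, mem_univ, true_and, mem_insert, mem_singleton, Fin.ext_iff]
    omega
  rw [hfiber, card_pair (by simp [Fin.ext_iff])]

theorem groupSum_pairing {K : ℕ} (w : Fin (2 * K) → ℝ) (k : Fin K) :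
    groupSum (pairing K) w k = ∑ j ∈ univ.filter (fun j : Fin (2 * K) => (j : ℕ) / 2 = k), w j := by
  simp only [groupSum, pairing, Fin.ext_iff]

/-- K = J/2 groups of 2 units each (J = 2K, K ≥ 2); only group 1
shares the treated unit's factor.  At the unique minimizer over the simplex of
Q(w) = σ²(1+w'w) + (1 - s₁)² + Σ_{k≥2} s_k², where s_k is the total weight on
group k, the misallocated weight Σ_{k≥2} s_k equals ((J-2)/J)·σ²/(σ²+2). -/
theorem many_groups_misallocation
    (K : ℕ) (hK : 2 ≤ K) (σ2 : ℝ) (hσ : 0 < σ2) :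
    let J : ℕ := 2 * K
    let k0 : Fin K := ⟨0, by omega⟩
    let s : (Fin (2 * K) → ℝ) → Fin K → ℝ := fun w k =>
      ∑ j ∈ Finset.univ.filter (fun j : Fin (2 * K) => (j : ℕ) / 2 = (k : ℕ)), w j
    let Q : (Fin (2 * K) → ℝ) → ℝ := fun w =>
      σ2 * (1 + ∑ j, w j ^ 2) +
        (1 - s w k0) ^ 2 + ∑ k ∈ Finset.univ.filter (fun k : Fin K => k ≠ k0), (s w k) ^ 2
    ∃ wbar : Fin (2 * K) → ℝ,
      (wbar ∈ stdSimplex ℝ (Fin (2 * K)) ∧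
        ∀ v ∈ stdSimplex ℝ (Fin (2 * K)), Q wbar ≤ Q v) ∧
      (∀ w' : Fin (2 * K) → ℝ,
        (w' ∈ stdSimplex ℝ (Fin (2 * K)) ∧
          ∀ v ∈ stdSimplex ℝ (Fin (2 * K)), Q w' ≤ Q v) → w' = wbar) ∧
      (∑ k ∈ Finset.univ.filter (fun k : Fin K => k ≠ k0), s wbar k
        = (((J : ℝ) - 2) / (J : ℝ)) * (σ2 / (σ2 + 2))) := by
  intro J k0 s Q
  have hs : s = groupSum (pairing K) := by
    funext w k
    exact (groupSum_pairing w k).symm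
  have hQ : Q = fun w => σ2 + groupedObjective (pairing K) σ2 (Pi.single k0 1) w := by
    funext w
    simp only [Q, hs, groupedObjective, sum_sq_sub_single]
    ring
  have hm := card_filter_pairing_eq (K := K)
  have he0 : 0 ≤ (Pi.single k0 1 : Fin K → ℝ) := Pi.single_nonneg.2 zero_le_one
  have he1 : ∑ k, (Pi.single k0 1 : Fin K → ℝ) k = 1 := by simp
  have hmem := groupedMinimizer_mem_stdSimplex hm two_ne_zero hσ.le he0 he1
  refine ⟨_, ⟨hmem, ?_⟩, ?_, ?_⟩
  · simpa [hQ] using fun v => groupedObjective_groupedMinimizer_le hm two_ne_zero hσ.le he1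
  · rintro w' ⟨hw', hmin⟩
    exact eq_groupedMinimizer_of_groupedObjective_le hm two_ne_zero hσ he1 hw'
      (by simpa [hQ] using hmin _ hmem)
  · rw [hs, sum_groupSum_groupedMinimizer_ne hm two_ne_zero, Fintype.card_fin]
    simp only [J]
    push_cast
    field_simp
end

section
/- For the deterministic sums S₁(T) = Σ_{t=1}^T t and S₂(T) = Σ_{t=1}^T t², one has S₁(T)/T² → 1/2 and S₂(T)/T³ → 1/3 as T → ∞; consequently, for real constants μ₀ ≠ μ₁ and y_{jt} = μⱼ + t, the no-intercept regression coefficient β̂_T = (Σ_t y_{1t} y_{0t})/(Σ_t y_{1t}²) satisfies T(β̂_T - 1) → (3/2)(μ₀ - μ₁). -/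
open Filter Topology

lemma sum1' (T : ℕ) : ∑ t ∈ Finset.Icc 1 T, (t : ℝ) = T * (T + 1) / 2 := by
  induction T with
  | zero => simp
  | succ n ih =>
    rw [Finset.sum_Icc_succ_top (by omega), ih]
    push_cast
    ring

lemma sum2' (T : ℕ) : ∑ t ∈ Finset.Icc 1 T, (t : ℝ) ^ 2 = T * (T + 1) * (2 * T + 1) / 6 := by
  induction T with
  | zero => simp
  | succ n ih =>
    rw [Finset.sum_Icc_succ_top (by omega), ih]
    push_cast
    ring

lemma sumprod' (a b : ℝ) (T : ℕ) :
    ∑ t ∈ Finset.Icc 1 T, (a + (t : ℝ)) * (b + (t : ℝ))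
      = a * b * T + (a + b) * (T * (T + 1) / 2) + T * (T + 1) * (2 * T + 1) / 6 := by
  induction T with
  | zero => simp
  | succ n ih =>
    rw [Finset.sum_Icc_succ_top (by omega), ih]
    push_cast
    ring

/-- Σ_{t≤T} t / T² → 1/2, Σ_{t≤T} t² / T³ → 1/3, and in the
noiseless no-intercept regression of y_{0t} = μ₀ + t on y_{1t} = μ₁ + t with
β̂_T = (Σ_t y_{1t} y_{0t})/(Σ_t y_{1t}²), T(β̂_T - 1) → (3/2)(μ₀ - μ₁). -/
theorem deterministic_trend_counterexample
    (μ0 μ1 : ℝ) (hμ : μ0 ≠ μ1)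
    (βhat : ℕ → ℝ)
    (hβ : βhat = fun T : ℕ =>
      (∑ t ∈ Finset.Icc 1 T, (μ1 + (t : ℝ)) * (μ0 + (t : ℝ))) /
        (∑ t ∈ Finset.Icc 1 T, (μ1 + (t : ℝ)) ^ 2)) :
    Tendsto (fun T : ℕ => (∑ t ∈ Finset.Icc 1 T, (t : ℝ)) / (T : ℝ) ^ 2)
      atTop (𝓝 (1 / 2)) ∧
    Tendsto (fun T : ℕ => (∑ t ∈ Finset.Icc 1 T, (t : ℝ) ^ 2) / (T : ℝ) ^ 3)
      atTop (𝓝 (1 / 3)) ∧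
    Tendsto (fun T : ℕ => (T : ℝ) * (βhat T - 1)) atTop
      (𝓝 ((3 / 2) * (μ0 - μ1))) := by
  have hinv : Tendsto (fun T : ℕ => 1 / (T : ℝ)) atTop (𝓝 0) :=
    tendsto_one_div_atTop_nhds_zero_nat
  refine ⟨?_, ?_, ?_⟩
  · have h : Tendsto (fun T : ℕ => (1 + 1 / (T : ℝ)) / 2) atTop (𝓝 ((1 + 0) / 2)) :=
      (tendsto_const_nhds.add hinv).div_const 2
    rw [show ((1:ℝ) + 0) / 2 = 1 / 2 by norm_num] at h
    refine h.congr' ?_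
    filter_upwards [eventually_ge_atTop 1] with T hT
    have hT0 : (T : ℝ) ≠ 0 := by positivity
    rw [sum1']
    field_simp
  · have h : Tendsto (fun T : ℕ => (1 + 1 / (T : ℝ)) * (2 + 1 / (T : ℝ)) / 6) atTop
        (𝓝 ((1 + 0) * (2 + 0) / 6)) :=
      ((tendsto_const_nhds.add hinv).mul (tendsto_const_nhds.add hinv)).div_const 6
    rw [show ((1:ℝ) + 0) * (2 + 0) / 6 = 1 / 3 by norm_num] at h
    refine h.congr' ?_
    filter_upwards [eventually_ge_atTop 1] with T hT
    have hT0 : (T : ℝ) ≠ 0 := by positivity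
    rw [sum2']
    field_simp
  · have hnum : Tendsto (fun T : ℕ =>
        (μ0 - μ1) * (μ1 * (1 / (T : ℝ)) + (1 + 1 / (T : ℝ)) / 2)) atTop
        (𝓝 ((μ0 - μ1) * (μ1 * 0 + (1 + 0) / 2))) :=
      (((hinv.const_mul μ1).add ((tendsto_const_nhds.add hinv).div_const 2)).const_mul (μ0 - μ1))
    have hden : Tendsto (fun T : ℕ =>
        μ1 ^ 2 * (1 / (T : ℝ)) * (1 / (T : ℝ)) + μ1 * (1 / (T : ℝ)) * (1 + 1 / (T : ℝ))
          + (1 + 1 / (T : ℝ)) * (2 + 1 / (T : ℝ)) / 6) atTop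
        (𝓝 (μ1 ^ 2 * 0 * 0 + μ1 * 0 * (1 + 0) + (1 + 0) * (2 + 0) / 6)) :=
      (((hinv.const_mul (μ1 ^ 2)).mul hinv).add ((hinv.const_mul μ1).mul
        (tendsto_const_nhds.add hinv))).add
        (((tendsto_const_nhds.add hinv).mul (tendsto_const_nhds.add hinv)).div_const 6)
    have hden0 : (μ1 ^ 2 * 0 * 0 + μ1 * 0 * (1 + 0) + (1 + 0) * (2 + 0) / 6 : ℝ) ≠ 0 := by
      norm_num
    have h := hnum.div hden hden0
    rw [show (μ0 - μ1) * (μ1 * 0 + (1 + 0) / 2) /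
        (μ1 ^ 2 * 0 * 0 + μ1 * 0 * (1 + 0) + (1 + 0) * (2 + 0) / 6) = 3 / 2 * (μ0 - μ1) by
      norm_num; ring] at h
    refine h.congr' ?_
    filter_upwards [eventually_ge_atTop 1,
      (tendsto_natCast_atTop_atTop (R := ℝ)).eventually_gt_atTop |μ1|] with T hT1 hTμ
    have hT0 : (T : ℝ) ≠ 0 := by positivity
    have e1 : ∑ t ∈ Finset.Icc 1 T, (μ1 + (t : ℝ)) ^ 2
        = μ1 * μ1 * T + (μ1 + μ1) * (T * (T + 1) / 2) + T * (T + 1) * (2 * T + 1) / 6 := by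
      simp_rw [sq]
      exact sumprod' μ1 μ1 T
    have e2 : ∑ t ∈ Finset.Icc 1 T, (μ1 + (t : ℝ)) * (μ0 + (t : ℝ))
        = μ1 * μ0 * T + (μ1 + μ0) * (T * (T + 1) / 2) + T * (T + 1) * (2 * T + 1) / 6 :=
      sumprod' μ1 μ0 T
    have hDpos : (0:ℝ) < μ1 * μ1 * T + (μ1 + μ1) * (T * (T + 1) / 2)
        + T * (T + 1) * (2 * T + 1) / 6 := by
      rw [← e1]
      have hmem : T ∈ Finset.Icc 1 T := Finset.mem_Icc.mpr ⟨hT1, le_rfl⟩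
      have hpos : (0:ℝ) < (μ1 + (T : ℝ)) ^ 2 := by
        have h2 : 0 < μ1 + (T : ℝ) := by
          have := neg_abs_le μ1
          linarith
        positivity
      calc (0:ℝ) < (μ1 + (T : ℝ)) ^ 2 := hpos
        _ ≤ _ := Finset.single_le_sum (f := fun t : ℕ => (μ1 + (t : ℝ)) ^ 2)
            (fun t _ => sq_nonneg _) hmem
    have hD0 : (μ1 * μ1 * T + (μ1 + μ1) * (T * (T + 1) / 2)
        + T * (T + 1) * (2 * T + 1) / 6 : ℝ) ≠ 0 := ne_of_gt hDpos
    have hdeneq : μ1 ^ 2 * (1 / (T : ℝ)) * (1 / (T : ℝ)) + μ1 * (1 / (T : ℝ)) * (1 + 1 / (T : ℝ))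
          + (1 + 1 / (T : ℝ)) * (2 + 1 / (T : ℝ)) / 6
        = (μ1 * μ1 * T + (μ1 + μ1) * (T * (T + 1) / 2)
            + T * (T + 1) * (2 * T + 1) / 6) / (T : ℝ) ^ 3 := by
      field_simp
      ring
    rw [Pi.div_apply]
    symm
    rw [hβ]
    simp only [e1, e2, hdeneq]
    rw [div_div_eq_mul_div, div_sub_one hD0, ← mul_div_assoc,
      div_eq_div_iff hD0 hD0]
    field_simp
    ring
end
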